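/- For real numbers n, k, α with 0 < α ≤ 1 and n > k + 1/2 + α (k a nonnegative integer), every u ∈ Hⁿ(ℝ) has its k-th derivative α-Hölder continuous: there is a constant C depending only on n, k, α such that |u^(k)(x) − u^(k)(y)| ≤ C ‖u‖_{Hⁿ} |x−y|^α for all x, y. -/

import Mathlib

/-!
The representative is `v = 𝓕⁻ w`. If `(1 + |ξ|)ⁿ w ∈ L²` with `n > s + 1/2`, Cauchy–Schwarz
against `(1 + |ξ|)^(s - n) ∈ L²` puts `(1 + |ξ|)ˢ w` in `L¹`; with `s = k` this lets us
differentiate `k` times under the integral sign, so `v⁽ᵏ⁾` is, up to reflection and sign, the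
Fourier transform of `(-2πiξ)ᵏ w`. The Hölder bound then comes from
`|𝐞 r - 𝐞 r'| ≤ min 2 (2π |r - r'|) ≤ 2^(1-α) (2π |r - r'|)^α`, which trades the factor
`|x - y|^α` for the weight `|ξ|^α`, and the `L¹` estimate with `s = k + α`.
-/

open MeasureTheory

/-- The `Hⁿ` norm of a function with Fourier transform `w`:
`‖(1+|ξ|)ⁿ w(ξ)‖_{L²}`. -/
noncomputable def weightedL2Norm (n : ℝ) (w : ℝ → ℂ) : ℝ :=
  (eLpNorm (fun ξ : ℝ => ((1 + |ξ|) ^ n : ℝ) • w ξ) 2 volume).toReal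

open Real Complex FourierTransform

lemma norm_fourierChar_sub_le_min (r r' : ℝ) :
    ‖(𝐞 r : ℂ) - 𝐞 r'‖ ≤ min 2 (2 * π * |r - r'|) := by
  have hfactor : (𝐞 r : ℂ) - 𝐞 r' = 𝐞 r' * (Complex.exp (I * ↑(2 * π * (r - r'))) - 1) := by
    simp only [Real.fourierChar_apply, mul_sub, mul_one, ← Complex.exp_add]
    congr 2; push_cast; ring
  rw [hfactor, norm_mul, Circle.norm_coe, one_mul]
  refine le_min ((norm_sub_le _ _).trans_eq ?_) (norm_exp_I_mul_ofReal_sub_one_le.trans_eq ?_)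
  · rw [Complex.norm_exp_I_mul_ofReal, norm_one]; norm_num
  · rw [Real.norm_eq_abs, abs_mul, abs_of_pos two_pi_pos]

lemma min_le_rpow_mul_rpow {c t α : ℝ} (hc : 0 ≤ c) (ht : 0 ≤ t) (hα0 : 0 ≤ α) (hα1 : α ≤ 1) :
    min c t ≤ c ^ (1 - α) * t ^ α := by
  have hm : 0 ≤ min c t := le_min hc ht
  calc min c t = (min c t) ^ (1 - α) * (min c t) ^ α := by
        rw [← rpow_add' hm (by norm_num), sub_add_cancel, rpow_one]
    _ ≤ c ^ (1 - α) * t ^ α := by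
        gcongr
        exacts [min_le_left _ _, min_le_right _ _]

lemma norm_fourierChar_sub_le_rpow {α : ℝ} (hα0 : 0 ≤ α) (hα1 : α ≤ 1) (r r' : ℝ) :
    ‖(𝐞 r : ℂ) - 𝐞 r'‖ ≤ 2 ^ (1 - α) * (2 * π) ^ α * |r - r'| ^ α := by
  rw [mul_assoc, ← mul_rpow two_pi_pos.le (abs_nonneg _)]
  exact (norm_fourierChar_sub_le_min r r').trans
    (min_le_rpow_mul_rpow zero_le_two (by positivity) hα0 hα1)

theorem norm_fourier_sub_le {E : Type*} [NormedAddCommGroup E] [NormedSpace ℂ E] {f : ℝ → E}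
    {α : ℝ} (hα0 : 0 ≤ α) (hα1 : α ≤ 1) (hf : Integrable f)
    (hfα : Integrable fun ξ ↦ |ξ| ^ α * ‖f ξ‖) (a b : ℝ) :
    ‖𝓕 f a - 𝓕 f b‖ ≤ 2 ^ (1 - α) * (2 * π) ^ α * |a - b| ^ α * ∫ ξ, |ξ| ^ α * ‖f ξ‖ := by
  have hdiff : 𝓕 f a - 𝓕 f b = ∫ ξ, ((𝐞 (-(a * ξ)) : ℂ) - 𝐞 (-(b * ξ))) • f ξ := by
    rw [fourier_eq, fourier_eq, ← integral_sub ((fourierIntegral_convergent_iff a).2 hf)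
      ((fourierIntegral_convergent_iff b).2 hf)]
    simp [Circle.smul_def, sub_smul]
  rw [hdiff, ← integral_const_mul]
  refine norm_integral_le_of_norm_le (hfα.const_mul _) (.of_forall fun ξ ↦ ?_)
  calc ‖((𝐞 (-(a * ξ)) : ℂ) - 𝐞 (-(b * ξ))) • f ξ‖
      ≤ 2 ^ (1 - α) * (2 * π) ^ α * |-(a * ξ) - -(b * ξ)| ^ α * ‖f ξ‖ := by
        rw [norm_smul]; gcongr; exact norm_fourierChar_sub_le_rpow hα0 hα1 _ _
    _ = 2 ^ (1 - α) * (2 * π) ^ α * |a - b| ^ α * (|ξ| ^ α * ‖f ξ‖) := by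
        rw [show -(a * ξ) - -(b * ξ) = (b - a) * ξ by ring, abs_mul, abs_sub_comm,
          mul_rpow (abs_nonneg _) (abs_nonneg _)]
        ring

section WeightedL2

variable {E : Type*} [NormedAddCommGroup E] [NormedSpace ℝ E] {n s : ℝ} {w : ℝ → E}

lemma continuous_one_add_abs_rpow (t : ℝ) : Continuous fun ξ : ℝ ↦ (1 + |ξ|) ^ t :=
  (continuous_const.add continuous_abs).rpow_const fun ξ ↦ .inl (by positivity : 0 < 1 + |ξ|).ne'

lemma aestronglyMeasurable_of_memLp_rpow_smul {p : ENNReal} {μ : Measure ℝ}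
    (hw : MemLp (fun ξ : ℝ ↦ ((1 + |ξ|) ^ n : ℝ) • w ξ) p μ) : AEStronglyMeasurable w μ := by
  have hw_eq : w = fun ξ ↦ ((1 + |ξ|) ^ (-n) : ℝ) • ((1 + |ξ|) ^ n : ℝ) • w ξ := by
    funext ξ
    rw [smul_smul, ← rpow_add (by positivity), neg_add_cancel, rpow_zero, one_smul]
  rw [hw_eq]
  exact (continuous_one_add_abs_rpow _).aestronglyMeasurable.smul hw.1

lemma memLp_two_one_add_abs_rpow {t : ℝ} (ht : t < -1 / 2) :
    MemLp (fun ξ : ℝ ↦ (1 + |ξ|) ^ t) 2 volume := by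
  rw [memLp_two_iff_integrable_sq (continuous_one_add_abs_rpow t).aestronglyMeasurable]
  have hsq : (fun ξ : ℝ ↦ ((1 + |ξ|) ^ t) ^ 2) = fun ξ ↦ (1 + ‖ξ‖) ^ (-(-2 * t)) := by
    funext ξ
    rw [← rpow_natCast, ← rpow_mul (by positivity), Real.norm_eq_abs]
    ring_nf
  rw [hsq]
  exact integrable_one_add_norm (by rw [Module.finrank_self]; push_cast; linarith)

lemma rpow_smul_eq_smul_rpow_smul (s n : ℝ) (w : ℝ → E) :
    (fun ξ : ℝ ↦ ((1 + |ξ|) ^ s : ℝ) • w ξ) =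
      (fun ξ : ℝ ↦ (1 + |ξ|) ^ (s - n)) • fun ξ ↦ ((1 + |ξ|) ^ n : ℝ) • w ξ := by
  funext ξ
  rw [Pi.smul_apply', smul_smul, ← rpow_add (by positivity), sub_add_cancel]

lemma norm_one_add_abs_rpow_smul (s ξ : ℝ) (x : E) :
    ‖((1 + |ξ|) ^ s : ℝ) • x‖ = (1 + |ξ|) ^ s * ‖x‖ := by
  rw [norm_smul, Real.norm_eq_abs, abs_of_pos (by positivity)]

variable (hs : s + 1 / 2 < n) (hw : MemLp (fun ξ : ℝ ↦ ((1 + |ξ|) ^ n : ℝ) • w ξ) 2 volume)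
include hs hw

lemma integrable_rpow_smul_of_memLp_two :
    Integrable (fun ξ : ℝ ↦ ((1 + |ξ|) ^ s : ℝ) • w ξ) volume := by
  rw [← memLp_one_iff_integrable, rpow_smul_eq_smul_rpow_smul s n]
  exact hw.smul (memLp_two_one_add_abs_rpow (by linarith))

lemma integrable_rpow_mul_norm_of_memLp_two :
    Integrable (fun ξ : ℝ ↦ (1 + |ξ|) ^ s * ‖w ξ‖) volume := by
  refine (integrable_rpow_smul_of_memLp_two hs hw).norm.congr (.of_forall fun ξ ↦ ?_)
  exact norm_one_add_abs_rpow_smul s ξ (w ξ)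

lemma integral_rpow_mul_norm_le_of_memLp_two :
    ∫ ξ, (1 + |ξ|) ^ s * ‖w ξ‖ ≤
      (eLpNorm (fun ξ : ℝ ↦ (1 + |ξ|) ^ (s - n)) 2 volume).toReal *
        (eLpNorm (fun ξ : ℝ ↦ ((1 + |ξ|) ^ n : ℝ) • w ξ) 2 volume).toReal := by
  have hφ := memLp_two_one_add_abs_rpow (t := s - n) (by linarith)
  calc ∫ ξ, (1 + |ξ|) ^ s * ‖w ξ‖ = ∫ ξ, ‖((1 + |ξ|) ^ s : ℝ) • w ξ‖ := by
        simp only [norm_one_add_abs_rpow_smul]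
    _ = (eLpNorm (fun ξ : ℝ ↦ ((1 + |ξ|) ^ s : ℝ) • w ξ) 1 volume).toReal := by
        rw [integral_norm_eq_lintegral_enorm (integrable_rpow_smul_of_memLp_two hs hw).1,
          eLpNorm_one_eq_lintegral_enorm]
    _ ≤ _ := by
        rw [rpow_smul_eq_smul_rpow_smul s n, ← ENNReal.toReal_mul]
        exact ENNReal.toReal_mono (ENNReal.mul_ne_top hφ.eLpNorm_ne_top hw.eLpNorm_ne_top)
          (eLpNorm_smul_le_mul_eLpNorm hw.1 hφ.1)

end WeightedL2

lemma integrable_pow_smul_of_memLp_two {E : Type*} [NormedAddCommGroup E] [NormedSpace ℝ E]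
    {n : ℝ} {w : ℝ → E} {k m : ℕ} (hk : k + 1 / 2 < n)
    (hw : MemLp (fun ξ : ℝ ↦ ((1 + |ξ|) ^ n : ℝ) • w ξ) 2 volume) (hm : m ≤ k) :
    Integrable (fun ξ : ℝ ↦ ξ ^ m • w ξ) volume := by
  refine (integrable_rpow_mul_norm_of_memLp_two hk hw).mono'
    ((continuous_pow m).aestronglyMeasurable.smul (aestronglyMeasurable_of_memLp_rpow_smul hw))
    (.of_forall fun ξ ↦ ?_)
  rw [norm_smul, norm_pow, Real.norm_eq_abs, rpow_natCast]
  gcongr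
  calc |ξ| ^ m ≤ (1 + |ξ|) ^ m := by gcongr; linarith
    _ ≤ (1 + |ξ|) ^ k := pow_le_pow_right₀ (by linarith [abs_nonneg ξ]) hm

section Fourier

variable {E : Type*} [NormedAddCommGroup E] [NormedSpace ℂ E] {n : ℝ} {w : ℝ → E} {k : ℕ}

lemma contDiff_fourierInv_of_memLp_two (hk : k + 1 / 2 < n)
    (hw : MemLp (fun ξ : ℝ ↦ ((1 + |ξ|) ^ n : ℝ) • w ξ) 2 volume) : ContDiff ℝ k (𝓕⁻ w) := by
  rw [funext (fourierInv_eq_fourier_neg w)]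
  refine (contDiff_fourier fun m hm ↦ ?_).comp contDiff_neg
  simpa [norm_smul] using (integrable_pow_smul_of_memLp_two hk hw (by exact_mod_cast hm)).norm

lemma iteratedDeriv_fourierInv (k : ℕ) (w : ℝ → E) (x : ℝ) :
    iteratedDeriv k (𝓕⁻ w) x = (-1 : ℝ) ^ k • iteratedDeriv k (𝓕 w) (-x) := by
  rw [funext (fourierInv_eq_fourier_neg w), iteratedDeriv_comp_neg]

theorem norm_iteratedDeriv_fourier_sub_le {α : ℝ} (hα0 : 0 ≤ α) (hα1 : α ≤ 1)
    (hn : k + α + 1 / 2 < n) (hw : MemLp (fun ξ : ℝ ↦ ((1 + |ξ|) ^ n : ℝ) • w ξ) 2 volume)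
    (a b : ℝ) :
    ‖iteratedDeriv k (𝓕 w) a - iteratedDeriv k (𝓕 w) b‖ ≤
      2 ^ (1 - α) * (2 * π) ^ α * (2 * π) ^ k *
        (eLpNorm (fun ξ : ℝ ↦ (1 + |ξ|) ^ (k + α - n)) 2 volume).toReal *
        (eLpNorm (fun ξ : ℝ ↦ ((1 + |ξ|) ^ n : ℝ) • w ξ) 2 volume).toReal * |a - b| ^ α := by
  have hmom (m : ℕ) (hm : m ≤ k) : Integrable (fun ξ : ℝ ↦ ξ ^ m • w ξ) volume :=
    integrable_pow_smul_of_memLp_two (by linarith) hw hm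
  rw [iteratedDeriv_fourier (N := k) (fun m hm ↦ hmom m (by exact_mod_cast hm)) le_rfl]
  set g : ℝ → E := fun ξ ↦ (-2 * π * I * ξ) ^ k • w ξ
  have hg : Integrable g volume := by
    refine ((hmom k le_rfl).smul ((-2 * π * I) ^ k)).congr (.of_forall fun ξ ↦ ?_)
    simp only [g, Pi.smul_apply, smul_smul, ← Complex.coe_smul, mul_pow]
    push_cast; ring_nf
  have hg_weight (ξ : ℝ) : |ξ| ^ α * ‖g ξ‖ ≤ (2 * π) ^ k * ((1 + |ξ|) ^ (k + α) * ‖w ξ‖) := by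
    have hg_norm : ‖g ξ‖ = (2 * π) ^ k * (|ξ| ^ k * ‖w ξ‖) := by
      simp only [g, norm_smul, norm_pow, norm_mul, norm_neg, Complex.norm_ofNat,
        Complex.norm_real, Complex.norm_I, Real.norm_eq_abs, abs_of_pos pi_pos]
      ring
    rw [hg_norm, mul_left_comm, ← mul_assoc (|ξ| ^ α)]
    gcongr
    calc |ξ| ^ α * |ξ| ^ k ≤ (1 + |ξ|) ^ α * (1 + |ξ|) ^ k := by gcongr <;> linarith
      _ = (1 + |ξ|) ^ (k + α) := by
          rw [← rpow_natCast, ← rpow_add (by positivity), add_comm α]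
  have hgα : Integrable (fun ξ ↦ |ξ| ^ α * ‖g ξ‖) volume :=
    ((integrable_rpow_mul_norm_of_memLp_two (s := k + α) (by linarith) hw).const_mul _).mono'
      ((continuous_abs.rpow_const fun _ ↦ .inr hα0).aestronglyMeasurable.mul hg.1.norm)
      (.of_forall fun ξ ↦ by
        rw [Real.norm_eq_abs, abs_of_nonneg (by positivity)]; exact hg_weight ξ)
  have hmoment : ∫ ξ, |ξ| ^ α * ‖g ξ‖ ≤ (2 * π) ^ k *
      ((eLpNorm (fun ξ : ℝ ↦ (1 + |ξ|) ^ (k + α - n)) 2 volume).toReal *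
        (eLpNorm (fun ξ : ℝ ↦ ((1 + |ξ|) ^ n : ℝ) • w ξ) 2 volume).toReal) := by
    calc ∫ ξ, |ξ| ^ α * ‖g ξ‖ ≤ ∫ ξ, (2 * π) ^ k * ((1 + |ξ|) ^ (k + α) * ‖w ξ‖) :=
          integral_mono hgα
            ((integrable_rpow_mul_norm_of_memLp_two (by linarith) hw).const_mul _) hg_weight
      _ ≤ _ := by
          rw [integral_const_mul]
          gcongr
          exact integral_rpow_mul_norm_le_of_memLp_two (by linarith) hw
  calc ‖𝓕 g a - 𝓕 g b‖ ≤ 2 ^ (1 - α) * (2 * π) ^ α * |a - b| ^ α * ∫ ξ, |ξ| ^ α * ‖g ξ‖ :=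
        norm_fourier_sub_le hα0 hα1 hg hgα a b
    _ ≤ 2 ^ (1 - α) * (2 * π) ^ α * |a - b| ^ α * ((2 * π) ^ k *
          ((eLpNorm (fun ξ : ℝ ↦ (1 + |ξ|) ^ (k + α - n)) 2 volume).toReal *
            (eLpNorm (fun ξ : ℝ ↦ ((1 + |ξ|) ^ n : ℝ) • w ξ) 2 volume).toReal)) := by
        gcongr
    _ = _ := by ring

end Fourier

/-- Hölder embedding of Sobolev spaces: for `0 < α ≤ 1`, `k ∈ ℕ` and `n > k + 1/2 + α`,
there is a constant `C` depending only on `n, k, α` such that every `u ∈ Hⁿ(ℝ)` has a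
representative `v` of class `Cᵏ` whose `k`-th derivative is `α`-Hölder with constant
`C ‖u‖_{Hⁿ}`. -/
theorem sobolev_embedding_holder (n α : ℝ) (k : ℕ) (hα0 : 0 < α) (hα1 : α ≤ 1)
    (hn : (k : ℝ) + 1 / 2 + α < n) :
    ∃ C : ℝ, 0 < C ∧ ∀ u w : ℝ → ℂ,
      u =ᵐ[volume] FourierTransformInv.fourierInv w →
      MemLp (fun ξ : ℝ => ((1 + |ξ|) ^ n : ℝ) • w ξ) 2 volume →
      ∃ v : ℝ → ℂ, u =ᵐ[volume] v ∧ ContDiff ℝ k v ∧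
        ∀ x y : ℝ, ‖iteratedDeriv k v x - iteratedDeriv k v y‖
          ≤ C * weightedL2Norm n w * |x - y| ^ α := by
  set C₀ := 2 ^ (1 - α) * (2 * π) ^ α * (2 * π) ^ k *
    (eLpNorm (fun ξ : ℝ ↦ (1 + |ξ|) ^ (k + α - n)) 2 volume).toReal
  refine ⟨C₀ + 1, by positivity, fun u w hu hw ↦ ⟨𝓕⁻ w, hu, ?_, fun x y ↦ ?_⟩⟩
  · exact contDiff_fourierInv_of_memLp_two (by linarith) hw
  · rw [iteratedDeriv_fourierInv, iteratedDeriv_fourierInv, ← smul_sub, norm_smul, norm_pow,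
      norm_neg, norm_one, one_pow, one_mul]
    calc _ ≤ C₀ * weightedL2Norm n w * |-x - -y| ^ α :=
          norm_iteratedDeriv_fourier_sub_le hα0.le hα1 (by linarith) hw (-x) (-y)
      _ ≤ (C₀ + 1) * weightedL2Norm n w * |x - y| ^ α := by
          rw [neg_sub_neg, abs_sub_comm]
          gcongr
          · exact ENNReal.toReal_nonneg
          · linarith
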